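/- Let s ∈ [2/3, 1), 0 < r ≤ 4, c ∈ ℝ, and let (P, N) be a traveling wave of the gene-drive frequency system with speed c such that P is strictly increasing and P(x) → 1 as x → +∞. Then c > 0. -/

import Mathlib

/-!
Multiplying the `P`-equation by `N²` puts it in divergence form,
`(N² P')' = -c N² P' - N² (r(1 - N) + 1) f(P)` with `f(p) = p(1 - p)(sp - (2s - 1))`.
Let `x*` be the point where `P` crosses the unstable state `(2s - 1)/s`, let `F' = f` with
`F(0) = 0`, and let `W(n) = n⁴(r(1 - n) + 1)`. The energy `G = (N² P')²/2 + W(N(x*)) F(P)` has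
`G' = -c (N² P')² + (W(N(x*)) - W(N)) f(P) P'`. For `r ≤ 4` the weight `W` increases on `[0, 1]`,
so `W(N(x*)) - W(N)` and `f(P)` change sign together at `x*`: if `c ≤ 0`, then `G` is
nondecreasing, strictly across `x*`, and `G ≥ 0` because `F(P) → 0` at `-∞`. As
`F(1) = (2 - 3s)/12 ≤ 0`, this keeps `N² P' ≤ P'` away from `0` near `+∞`, so `P` is unbounded.
-/

open Filter Set Topology

section Order

variable {α β : Type*} [LinearOrder α] [TopologicalSpace β] [Preorder β]
  [OrderClosedTopology β] {f : α → β} {b : β}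

theorem StrictMono.lt_of_tendsto_atTop [NoMaxOrder α] (hf : StrictMono f)
    (h : Tendsto f atTop (𝓝 b)) (x : α) : f x < b :=
  let ⟨y, hy⟩ := exists_gt x
  (hf hy).trans_le (hf.monotone.ge_of_tendsto h y)

theorem StrictMono.lt_of_tendsto_atBot [NoMinOrder α] (hf : StrictMono f)
    (h : Tendsto f atBot (𝓝 b)) (x : α) : b < f x :=
  let ⟨y, hy⟩ := exists_lt x
  (hf.monotone.le_of_tendsto h y).trans_lt (hf hy)

theorem StrictAnti.lt_of_tendsto_atBot [NoMinOrder α] (hf : StrictAnti f)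
    (h : Tendsto f atBot (𝓝 b)) (x : α) : f x < b :=
  let ⟨y, hy⟩ := exists_lt x
  (hf hy).trans_le (hf.antitone.ge_of_tendsto h y)

theorem mul_nonneg_of_monotone_of_eq_zero {u v : α → ℝ} (hu : Monotone u) (hv : Monotone v)
    {a : α} (hua : u a = 0) (hva : v a = 0) (x : α) : 0 ≤ u x * v x := by
  rcases le_total x a with hx | hx
  · exact mul_nonneg_of_nonpos_of_nonpos (hua ▸ hu hx) (hva ▸ hv hx)
  · exact mul_nonneg (hua ▸ hu hx) (hva ▸ hv hx)

end Order

section Calculus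

variable {f : ℝ → ℝ}

theorem StrictMono.exists_deriv_pos (hf : StrictMono f) (hd : Differentiable ℝ f) {a b : ℝ}
    (hab : a < b) : ∃ ξ ∈ Ioo a b, 0 < deriv f ξ := by
  obtain ⟨ξ, hξ, h⟩ := exists_deriv_eq_slope f hab hd.continuous.continuousOn hd.differentiableOn
  exact ⟨ξ, hξ, h ▸ div_pos (sub_pos.2 (hf hab)) (sub_pos.2 hab)⟩

theorem Monotone.lt_of_hasDerivAt_pos (hf : Monotone f) {f' ξ a b : ℝ} (hd : HasDerivAt f f' ξ)
    (hf' : 0 < f') (ha : a < ξ) (hb : ξ < b) : f a < f b := by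
  by_contra! h
  have hmax : IsLocalMax f ξ := mem_of_superset (Icc_mem_nhds ha hb) fun y hy =>
    (hf hy.2).trans (h.trans (hf ha.le))
  exact hf'.ne' (hmax.hasDerivAt_eq_zero hd)

theorem tendsto_atTop_of_eventually_le_deriv (hf : Differentiable ℝ f) {ε : ℝ} (hε : 0 < ε)
    (h : ∀ᶠ x in atTop, ε ≤ deriv f x) : Tendsto f atTop atTop := by
  obtain ⟨B, hB⟩ := eventually_atTop.1 h
  have hlin : ∀ x ∈ Ici B, ε * (x - B) ≤ f x - f B := fun x hx =>
    (convex_Ici B).mul_sub_le_image_sub_of_le_deriv hf.continuous.continuousOn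
      hf.differentiableOn (fun y hy => hB y (interior_subset hy)) B self_mem_Ici x hx hx
  refine tendsto_atTop_mono' atTop ?_ (tendsto_atTop_add_const_left atTop (f B)
    ((tendsto_atTop_add_const_right atTop (-B) tendsto_id).const_mul_atTop hε))
  filter_upwards [eventually_ge_atTop B] with x hx
  show f B + ε * (x + -B) ≤ f x
  linarith [hlin x hx]

end Calculus

section Drive

variable (s : ℝ)

noncomputable def driveReaction (p : ℝ) : ℝ := p * (1 - p) * (s * p - (2 * s - 1))

noncomputable def drivePotential (p : ℝ) : ℝ :=
  -s * p ^ 4 / 4 + (3 * s - 1) * p ^ 3 / 3 - (2 * s - 1) * p ^ 2 / 2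

theorem hasDerivAt_drivePotential (p : ℝ) :
    HasDerivAt (drivePotential s) (driveReaction s p) p := by
  refine (((((hasDerivAt_pow 4 p).const_mul (-s)).div_const 4).fun_add
    (((hasDerivAt_pow 3 p).const_mul (3 * s - 1)).div_const 3)).fun_sub
    (((hasDerivAt_pow 2 p).const_mul (2 * s - 1)).div_const 2)).congr_deriv ?_
  unfold driveReaction
  norm_num
  ring

theorem continuous_drivePotential : Continuous (drivePotential s) :=
  continuous_iff_continuousAt.2 fun p => (hasDerivAt_drivePotential s p).continuousAt

@[simp]
theorem drivePotential_zero : drivePotential s 0 = 0 := by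
  simp [drivePotential]

variable {s}

theorem drivePotential_one_nonpos (hs : 2 / 3 ≤ s) : drivePotential s 1 ≤ 0 := by
  norm_num [drivePotential]
  linarith

theorem driveReaction_pos {p : ℝ} (hp0 : 0 < p) (hp1 : p < 1) (h : 2 * s - 1 < s * p) :
    0 < driveReaction s p :=
  mul_pos (mul_pos hp0 (sub_pos.2 hp1)) (sub_pos.2 h)

noncomputable def driveWeight (r n : ℝ) : ℝ := n ^ 4 * (r * (1 - n) + 1)

theorem strictMonoOn_driveWeight {r : ℝ} (hr0 : 0 ≤ r) (hr4 : r ≤ 4) :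
    StrictMonoOn (driveWeight r) (Icc 0 1) := by
  refine strictMonoOn_of_deriv_pos (convex_Icc 0 1)
    (by unfold driveWeight; fun_prop : Continuous (driveWeight r)).continuousOn fun n hn => ?_
  rw [interior_Icc] at hn
  have hd : HasDerivAt (driveWeight r) (n ^ 3 * (4 + 4 * r - 5 * r * n)) n := by
    have h := ((hasDerivAt_pow 4 n).const_mul (r + 1)).fun_sub
      ((hasDerivAt_pow 5 n).const_mul r)
    refine (h.congr_of_eventuallyEq (Eventually.of_forall fun m => ?_)).congr_deriv ?_
    · unfold driveWeight
      ring
    · norm_num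
      ring
  rw [hd.deriv]
  exact mul_pos (pow_pos hn.1 3) (by nlinarith [hn.1, hn.2])

end Drive

section Wave

variable {s r c w : ℝ} {P N : ℝ → ℝ}

theorem hasDerivAt_sq_mul_deriv {g x : ℝ} (hN : DifferentiableAt ℝ N x)
    (hP' : DifferentiableAt ℝ (deriv P) x) (hN0 : N x ≠ 0)
    (heq : -deriv (deriv P) x - c * deriv P x - 2 * (deriv N x / N x) * deriv P x = g) :
    HasDerivAt (fun y => N y ^ 2 * deriv P y) (-c * (N x ^ 2 * deriv P x) - N x ^ 2 * g) x := by
  refine ((hN.hasDerivAt.fun_pow 2).fun_mul hP'.hasDerivAt).congr_deriv ?_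
  rw [← heq]
  field_simp
  ring

noncomputable def waveEnergy (s w : ℝ) (P N : ℝ → ℝ) (x : ℝ) : ℝ :=
  (N x ^ 2 * deriv P x) ^ 2 / 2 + w * drivePotential s (P x)

theorem hasDerivAt_waveEnergy {x : ℝ} (hP : DifferentiableAt ℝ P x)
    (hP' : DifferentiableAt ℝ (deriv P) x) (hN : DifferentiableAt ℝ N x) (hN0 : N x ≠ 0)
    (heq : -deriv (deriv P) x - c * deriv P x - 2 * (deriv N x / N x) * deriv P x
      = (r * (1 - N x) + 1) * P x * (1 - P x) * (s * P x - (2 * s - 1))) :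
    HasDerivAt (waveEnergy s w P N) (-c * (N x ^ 2 * deriv P x) ^ 2
      + (w - driveWeight r (N x)) * driveReaction s (P x) * deriv P x) x := by
  have hQ := hasDerivAt_sq_mul_deriv hN hP' hN0 heq
  have hF := (hasDerivAt_drivePotential s (P x)).comp x hP.hasDerivAt
  refine (((hQ.fun_pow 2).div_const 2).fun_add (hF.const_mul w)).congr_deriv ?_
  unfold driveWeight driveReaction
  ring

theorem waveEnergy_monotone (hc : c ≤ 0) (hPd : Differentiable ℝ P)
    (hP'd : Differentiable ℝ (deriv P)) (hNd : Differentiable ℝ N) (hN0 : ∀ x, 0 < N x)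
    (hP : Monotone P)
    (heqP : ∀ x, -deriv (deriv P) x - c * deriv P x - 2 * (deriv N x / N x) * deriv P x
      = (r * (1 - N x) + 1) * P x * (1 - P x) * (s * P x - (2 * s - 1)))
    (hsign : ∀ x, 0 ≤ (w - driveWeight r (N x)) * driveReaction s (P x)) :
    Monotone (waveEnergy s w P N) := by
  have hG x := hasDerivAt_waveEnergy (w := w) (hPd x) (hP'd x) (hNd x) (hN0 x).ne' (heqP x)
  refine monotone_of_deriv_nonneg (fun x => (hG x).differentiableAt) fun x => ?_
  rw [(hG x).deriv]
  exact add_nonneg (mul_nonneg (neg_nonneg.2 hc) (sq_nonneg _))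
    (mul_nonneg (hsign x) hP.deriv_nonneg)

theorem driveWeight_sub_mul_driveReaction_nonneg {xs : ℝ} (hr0 : 0 ≤ r) (hr4 : r ≤ 4)
    (hs : 0 ≤ s) (hN : Antitone N) (hNmem : ∀ x, N x ∈ Icc 0 1) (hP : Monotone P)
    (hPmem : ∀ x, P x ∈ Icc 0 1) (hxs : s * P xs = 2 * s - 1) (x : ℝ) :
    0 ≤ (driveWeight r (N xs) - driveWeight r (N x)) * driveReaction s (P x) := by
  have hu : Monotone fun x => driveWeight r (N xs) - driveWeight r (N x) := fun a b hab =>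
    sub_le_sub_left ((strictMonoOn_driveWeight hr0 hr4).monotoneOn (hNmem b) (hNmem a) (hN hab)) _
  have hv : Monotone fun x => s * P x - (2 * s - 1) := fun a b hab =>
    sub_le_sub_right (mul_le_mul_of_nonneg_left (hP hab) hs) _
  have huv := mul_nonneg_of_monotone_of_eq_zero hu hv (sub_self _) (sub_eq_zero.2 hxs) x
  have hPx : 0 ≤ P x * (1 - P x) := mul_nonneg (hPmem x).1 (sub_nonneg.2 (hPmem x).2)
  unfold driveReaction
  linarith [mul_nonneg hPx huv]

theorem driveWeight_sub_mul_driveReaction_pos {xs x : ℝ} (hr0 : 0 ≤ r) (hr4 : r ≤ 4)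
    (hs : 0 < s) (hN : StrictAnti N) (hNxs : N xs ∈ Icc 0 1) (hNx : N x ∈ Icc 0 1)
    (hP : StrictMono P) (hP0 : 0 < P x) (hP1 : P x < 1) (hxs : s * P xs = 2 * s - 1)
    (hx : xs < x) : 0 < (driveWeight r (N xs) - driveWeight r (N x)) * driveReaction s (P x) :=
  mul_pos (sub_pos.2 (strictMonoOn_driveWeight hr0 hr4 hNx hNxs (hN hx)))
    (driveReaction_pos hP0 hP1 (hxs ▸ mul_lt_mul_of_pos_left (hP hx) hs))

theorem waveEnergy_nonneg (hG : Monotone (waveEnergy s w P N)) (hP : Tendsto P atBot (𝓝 0))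
    (x : ℝ) : 0 ≤ waveEnergy s w P N x := by
  have hlim : Tendsto (fun a => w * drivePotential s (P a)) atBot (𝓝 0) := by
    simpa using (((continuous_drivePotential s).tendsto 0).comp hP).const_mul w
  refine le_of_tendsto hlim ?_
  filter_upwards [eventually_le_atBot x] with a ha
  exact (le_add_of_nonneg_left (by positivity)).trans (hG ha)

theorem eventually_sqrt_waveEnergy_le_deriv {x₀ : ℝ} (hG : Monotone (waveEnergy s w P N))
    (hG₀ : 0 < waveEnergy s w P N x₀) (hs : 2 / 3 ≤ s) (hw : 0 ≤ w)
    (hP : Tendsto P atTop (𝓝 1)) (hP' : ∀ x, 0 ≤ deriv P x) (hNmem : ∀ x, N x ∈ Icc 0 1) :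
    ∀ᶠ x in atTop, √(waveEnergy s w P N x₀) ≤ deriv P x := by
  set γ := waveEnergy s w P N x₀
  have hlim : Tendsto (fun x => w * drivePotential s (P x)) atTop
      (𝓝 (w * drivePotential s 1)) :=
    (((continuous_drivePotential s).tendsto 1).comp hP).const_mul w
  have hF1 : w * drivePotential s 1 < γ / 2 :=
    (mul_nonpos_of_nonneg_of_nonpos hw (drivePotential_one_nonpos hs)).trans_lt (half_pos hG₀)
  filter_upwards [hlim.eventually (gt_mem_nhds hF1), eventually_ge_atTop x₀] with x hFx hx
  have hGx : γ ≤ waveEnergy s w P N x := hG hx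
  have hQ0 : 0 ≤ N x ^ 2 * deriv P x := mul_nonneg (sq_nonneg _) (hP' x)
  have hQ : N x ^ 2 * deriv P x ≤ deriv P x :=
    mul_le_of_le_one_left (hP' x) (pow_le_one₀ (hNmem x).1 (hNmem x).2)
  rw [Real.sqrt_le_left (hP' x)]
  unfold waveEnergy at hGx
  nlinarith [mul_le_mul hQ hQ hQ0 (hP' x)]

end Wave

theorem stmt11_general
    (s r c : ℝ) (hs0 : 2 / 3 ≤ s) (hs1 : s < 1) (hr : 0 < r) (hr4 : r ≤ 4)
    (P N : ℝ → ℝ)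
    (hP2 : ContDiff ℝ 2 P) (hN2 : ContDiff ℝ 2 N)
    (hNpos : ∀ x, 0 < N x)
    (hPmono : StrictMono P) (hNanti : StrictAnti N)
    (hPlim : Filter.Tendsto P Filter.atBot (nhds 0))
    (hNlim : Filter.Tendsto N Filter.atBot (nhds 1))
    (hPlim' : Filter.Tendsto P Filter.atTop (nhds 1))
    (heqP : ∀ x, -deriv (deriv P) x - c * deriv P x - 2 * (deriv N x / N x) * deriv P x
      = (r * (1 - N x) + 1) * P x * (1 - P x) * (s * P x - (2 * s - 1))) :
    0 < c := by
  by_contra! hc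
  have hPd : Differentiable ℝ P := hP2.differentiable two_ne_zero
  have hNd : Differentiable ℝ N := hN2.differentiable two_ne_zero
  have hP0 := hPmono.lt_of_tendsto_atBot hPlim
  have hP1 := hPmono.lt_of_tendsto_atTop hPlim'
  have hNmem x : N x ∈ Icc (0 : ℝ) 1 := ⟨(hNpos x).le, (hNanti.lt_of_tendsto_atBot hNlim x).le⟩
  obtain ⟨xs, hxs : s * P xs = 2 * s - 1⟩ : 2 * s - 1 ∈ range fun x => s * P x :=
    mem_range_of_exists_le_of_exists_ge (continuous_const.mul hPd.continuous)
      ((hPlim.const_mul s).eventually (ge_mem_nhds (by linarith))).exists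
      ((hPlim'.const_mul s).eventually (le_mem_nhds (by linarith))).exists
  set w := driveWeight r (N xs)
  have hw : 0 ≤ w := mul_nonneg (pow_nonneg (hNmem xs).1 4) (by nlinarith [(hNmem xs).2])
  have hG : Monotone (waveEnergy s w P N) :=
    waveEnergy_monotone hc hPd hP2.differentiable_deriv_two hNd hNpos hPmono.monotone heqP
      (driveWeight_sub_mul_driveReaction_nonneg hr.le hr4 (by linarith) hNanti.antitone hNmem
        hPmono.monotone (fun x => ⟨(hP0 x).le, (hP1 x).le⟩) hxs)
  obtain ⟨ξ, hξ, hP'ξ⟩ := hPmono.exists_deriv_pos hPd (lt_add_one xs)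
  have hsignξ := driveWeight_sub_mul_driveReaction_pos hr.le hr4 (by linarith) hNanti
    (hNmem xs) (hNmem ξ) hPmono (hP0 ξ) (hP1 ξ) hxs hξ.1
  have hGξ := hasDerivAt_waveEnergy (w := w) (hPd ξ) (hP2.differentiable_deriv_two ξ) (hNd ξ)
    (hNpos ξ).ne' (heqP ξ)
  have hGlt : waveEnergy s w P N xs < waveEnergy s w P N (xs + 1) :=
    hG.lt_of_hasDerivAt_pos hGξ (by nlinarith [mul_pos hsignξ hP'ξ]) hξ.1 hξ.2
  have hG₀ : 0 < waveEnergy s w P N (xs + 1) := (waveEnergy_nonneg hG hPlim xs).trans_lt hGlt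
  refine not_tendsto_nhds_of_tendsto_atTop (tendsto_atTop_of_eventually_le_deriv hPd
    (Real.sqrt_pos.2 hG₀) ?_) 1 hPlim'
  exact eventually_sqrt_waveEnergy_le_deriv hG hG₀ hs0 hw hPlim'
    (fun _ => hPmono.monotone.deriv_nonneg) hNmem

/-- For `s ∈ [2/3, 1)` and `0 < r ≤ 4`, a traveling wave of the
gene-drive frequency system with strictly increasing `P` and `P(x) → 1` as
`x → +∞` has speed `c > 0`. -/
theorem stmt11
    (s r c : ℝ) (hs0 : 2 / 3 ≤ s) (hs1 : s < 1) (hr : 0 < r) (hr4 : r ≤ 4)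
    (P N : ℝ → ℝ)
    (hP2 : ContDiff ℝ 2 P) (hN2 : ContDiff ℝ 2 N)
    (hNpos : ∀ x, 0 < N x)
    (hPbd : Bornology.IsBounded (Set.range P))
    (hNbd : Bornology.IsBounded (Set.range N))
    (hPnn : ∀ x, 0 ≤ P x)
    (hPmono : StrictMono P) (hNanti : StrictAnti N)
    (hPlim : Filter.Tendsto P Filter.atBot (nhds 0))
    (hNlim : Filter.Tendsto N Filter.atBot (nhds 1))
    (hPlim' : Filter.Tendsto P Filter.atTop (nhds 1))
    (heqP : ∀ x, -deriv (deriv P) x - c * deriv P x - 2 * (deriv N x / N x) * deriv P x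
      = (r * (1 - N x) + 1) * P x * (1 - P x) * (s * P x - (2 * s - 1)))
    (heqN : ∀ x, -deriv (deriv N) x - c * deriv N x
      = N x * ((1 - s + s * (1 - P x) ^ 2) * (r * (1 - N x) + 1) - 1)) :
    0 < c :=
  stmt11_general s r c hs0 hs1 hr hr4 P N hP2 hN2 hNpos hPmono hNanti hPlim hNlim hPlim' heqP
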